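/- arXiv:1806.03700 — 6 statements merged into one kernel-verified Lean document; each statement's English description precedes it below -/
import Mathlib

section
/- For every finitely presented group G and every natural number g ≥ 2, there exist a normal subgroup N of the genus-g surface group SurfaceGroup g and an injective group homomorphism from G into the quotient group (SurfaceGroup g)/N. (Equivalently: every finitely presented group embeds in the deck transformation group of some regular cover of the closed orientable surface of genus g.) -/
open scoped commutatorElement in
/-- The surface relator `∏ ⁅aᵢ,bᵢ⁆` in `FreeGroup (Fin (2*g))`. -/
def surfaceRelator (g : ℕ) : FreeGroup (Fin (2 * g)) :=
  ((List.finRange g).map fun i =>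
    ⁅FreeGroup.of (⟨i.1, by omega⟩ : Fin (2 * g)),
     FreeGroup.of (⟨g + i.1, by omega⟩ : Fin (2 * g))⁆).prod

/-- The genus-`g` surface group. -/
def SurfaceGroup (g : ℕ) : Type :=
  PresentedGroup ({surfaceRelator g} : Set (FreeGroup (Fin (2 * g))))

instance (g : ℕ) : Group (SurfaceGroup g) := by unfold SurfaceGroup; infer_instance

/-- `G` is finitely presented: isomorphic to a presented group on finitely many
generators with finitely many relators. -/
def IsFinitelyPresented (G : Type*) [Group G] : Prop :=
  ∃ (m : ℕ) (R : Finset (FreeGroup (Fin m))),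
    Nonempty (G ≃* PresentedGroup (R : Set (FreeGroup (Fin m))))

/-! Finitely presented groups are countable, and a countable group `C` embeds in a
two-generator group (Higman–Neumann–Neumann): let `c₀ = 1, c₁, c₂, …` enumerate `C` and let `t`
be a stable letter over `C ∗ F(X, Y)` conjugating `Yⁱ X Y⁻ⁱ` to `cᵢ · Xⁱ Y X⁻ⁱ`; both families are
free bases, so this is an HNN extension, and `C` lies in the subgroup generated by `X` and `t`
because `Y = t X t⁻¹`. A surface group of genus `g ≥ 2` maps onto `F(X, Y)` by
`a₁ ↦ X, b₁ ↦ Y, a₂ ↦ Y, b₂ ↦ X` and all other generators to `1`, as `⁅X, Y⁆⁅Y, X⁆ = 1`; hence it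
maps onto every two-generator group, and `C` embeds in its quotient by the kernel. -/

open Function
open Monoid.Coprod (inl inr snd inl_injective)
open scoped Monoid.Coprod commutatorElement

universe u

namespace FreeGroup

def shiftAut : Multiplicative ℤ →* MulAut (FreeGroup ℤ) where
  toFun n := freeGroupCongr (Equiv.addRight n.toAdd)
  map_one' := MulEquiv.toMonoidHom_injective <| by ext k; simp
  map_mul' m n := MulEquiv.toMonoidHom_injective <| by ext k; simp [add_assoc, add_comm n.toAdd]

theorem shiftAut_of (n : Multiplicative ℤ) (k : ℤ) : shiftAut n (of k) = of (k + n.toAdd) := by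
  simp [shiftAut]

theorem injective_lift_conj_pow {α : Type*} [DecidableEq α] {x y : α} (hxy : x ≠ y) :
    Injective (lift fun i : ℕ => of y ^ i * of x * (of y ^ i)⁻¹) := by
  -- In `F(ℤ) ⋊ ℤ`, conjugating `of 0` by the `i`-th power of the shift gives `of i`.
  let h : FreeGroup α →* FreeGroup ℤ ⋊[shiftAut] Multiplicative ℤ := lift fun v =>
    if v = x then .inl (of 0) else if v = y then .inr (.ofAdd 1) else 1
  have hcomp : h.comp (lift fun i : ℕ => of y ^ i * of x * (of y ^ i)⁻¹) =
      SemidirectProduct.inl.comp (map ((↑) : ℕ → ℤ)) := by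
    refine ext_hom _ _ fun i => ?_
    have hx : h (of x) = .inl (of 0) := by simp [h]
    have hy : h (of y) = .inr (.ofAdd 1) := by simp [h, hxy.symm]
    have hyi : h (of y ^ i) = .inr (.ofAdd (i : ℤ)) := by
      rw [map_pow, hy, ← map_pow, ← ofAdd_nsmul, nsmul_one]
    simp only [MonoidHom.comp_apply, lift_apply_of, map.of]
    rw [_root_.map_mul, _root_.map_mul, _root_.map_inv, hx, hyi, ← _root_.map_inv,
      ← SemidirectProduct.inl_aut, shiftAut_of, toAdd_ofAdd, zero_add]
  refine Injective.of_comp (f := h) ?_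
  rw [← MonoidHom.coe_comp, hcomp, MonoidHom.coe_comp]
  exact SemidirectProduct.inl_injective.comp (map_injective Nat.cast_injective)

end FreeGroup

theorem Monoid.Coprod.injective_lift_inl_mul_inr {ι C F : Type*} [Group C] [Group F]
    (c : ι → C) {b : ι → F} (hb : Injective (FreeGroup.lift b)) :
    Injective (FreeGroup.lift fun i => inl (c i) * inr (b i) : FreeGroup ι →* C ∗ F) := by
  have : (snd : C ∗ F →* F).comp (FreeGroup.lift fun i => inl (c i) * inr (b i)) =
      FreeGroup.lift b :=
    FreeGroup.ext_hom _ _ fun i => by simp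
  exact Injective.of_comp (f := snd) (by rwa [← MonoidHom.coe_comp, this])

theorem HNNExtension.t_mul_of_mul_inv_t_ofInjective {K G : Type*} [Group K] [Group G]
    {θA θB : K →* G} (hA : Injective θA) (hB : Injective θB) (k : K) :
    (t : HNNExtension G θA.range θB.range
        ((MonoidHom.ofInjective hA).symm.trans (MonoidHom.ofInjective hB))) * of (θA k) * t⁻¹ =
      of (θB k) := by
  have := equiv_eq_conj (φ := (MonoidHom.ofInjective hA).symm.trans (MonoidHom.ofInjective hB))
    (MonoidHom.ofInjective hA k)
  rw [MulEquiv.trans_apply, MulEquiv.symm_apply_apply, MonoidHom.ofInjective_apply,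
    MonoidHom.ofInjective_apply] at this
  exact this.symm

theorem MonoidHom.range_le_of_closure_eq_top {G H : Type*} [Group G] [Group H] (f : G →* H)
    {s : Set G} (hs : Subgroup.closure s = ⊤) {S : Subgroup H} (h : f '' s ⊆ S) : f.range ≤ S := by
  rwa [range_eq_map, ← hs, map_closure, Subgroup.closure_le]

theorem exists_surjective_nat_apply_zero_eq_one (α : Type*) [One α] [Countable α] :
    ∃ c : ℕ → α, c 0 = 1 ∧ Surjective c := by
  obtain ⟨γ, hγ⟩ := exists_surjective_nat α
  refine ⟨fun n => Nat.casesOn n 1 γ, rfl, fun a => ?_⟩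
  obtain ⟨n, rfl⟩ := hγ a
  exact ⟨n + 1, rfl⟩

open Subgroup in
theorem exists_injective_range_le_closure_pair (C : Type u) [Group C] [Countable C] :
    ∃ (H : Type u) (_ : Group H) (x y : H) (j : C →* H),
      Injective j ∧ j.range ≤ closure {x, y} := by
  obtain ⟨c, hc0, hc⟩ := exists_surjective_nat_apply_zero_eq_one C
  let X : FreeGroup (Fin 2) := .of 0
  let Y : FreeGroup (Fin 2) := .of 1
  let θA : FreeGroup ℕ →* C ∗ FreeGroup (Fin 2) :=
    FreeGroup.lift fun i => inl 1 * inr (Y ^ i * X * (Y ^ i)⁻¹)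
  let θB : FreeGroup ℕ →* C ∗ FreeGroup (Fin 2) :=
    FreeGroup.lift fun i => inl (c i) * inr (X ^ i * Y * (X ^ i)⁻¹)
  have hA : Injective θA := Monoid.Coprod.injective_lift_inl_mul_inr _
    (FreeGroup.injective_lift_conj_pow (by decide : (0 : Fin 2) ≠ 1))
  have hB : Injective θB := Monoid.Coprod.injective_lift_inl_mul_inr _
    (FreeGroup.injective_lift_conj_pow (by decide : (1 : Fin 2) ≠ 0))
  let H := HNNExtension (C ∗ FreeGroup (Fin 2)) θA.range θB.range
    ((MonoidHom.ofInjective hA).symm.trans (MonoidHom.ofInjective hB))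
  let ι : C ∗ FreeGroup (Fin 2) →* H := HNNExtension.of
  let t : H := HNNExtension.t
  have hrel (i : ℕ) : t * ι (inr (Y ^ i * X * (Y ^ i)⁻¹)) * t⁻¹ =
      ι (inl (c i)) * ι (inr (X ^ i * Y * (X ^ i)⁻¹)) := by
    simpa [θA, θB] using HNNExtension.t_mul_of_mul_inv_t_ofInjective hA hB (.of i)
  let S := closure {ι (inr X), t}
  have hX : ι (inr X) ∈ S := subset_closure (by simp)
  have ht : t ∈ S := subset_closure (by simp)
  have hY : ι (inr Y) ∈ S := by
    have h0 := hrel 0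
    simp only [pow_zero, one_mul, inv_one, mul_one, hc0, map_one] at h0
    rw [← h0]
    exact mul_mem (mul_mem ht hX) (inv_mem ht)
  have hfree : (ι.comp inr).range ≤ S := by
    refine MonoidHom.range_le_of_closure_eq_top _ (FreeGroup.closure_range_of _) ?_
    rintro _ ⟨_, ⟨v, rfl⟩, rfl⟩
    fin_cases v
    exacts [hX, hY]
  have hrange : (ι.comp inl).range ≤ S := by
    refine MonoidHom.range_le_of_closure_eq_top _ (s := Set.range c) (by simp [hc.range_eq]) ?_
    rintro _ ⟨_, ⟨i, rfl⟩, rfl⟩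
    rw [SetLike.mem_coe, MonoidHom.comp_apply, eq_mul_inv_of_mul_eq (hrel i).symm]
    exact mul_mem (mul_mem (mul_mem ht (hfree ⟨_, rfl⟩)) (inv_mem ht)) (inv_mem (hfree ⟨_, rfl⟩))
  exact ⟨H, inferInstance, ι (inr X), t, ι.comp inl,
    (HNNExtension.of_injective _).comp inl_injective, hrange⟩

theorem List.prod_map_finRange_eq_of_two_le {M : Type*} [Monoid M] {n : ℕ} (hn : 2 ≤ n)
    {Q : Fin n → M} (hQ : ∀ i : Fin n, 2 ≤ i.val → Q i = 1) :
    ((List.finRange n).map Q).prod = Q ⟨0, by omega⟩ * Q ⟨1, by omega⟩ := by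
  obtain ⟨k, rfl⟩ : ∃ k, n = k + 2 := ⟨n - 2, by omega⟩
  rw [← List.ofFn_eq_map, List.ofFn_succ, List.ofFn_succ, List.prod_cons, List.prod_cons,
    List.prod_eq_one, mul_one]
  · rfl
  · simp only [List.mem_ofFn, forall_exists_index]
    rintro _ i rfl
    exact hQ _ (by simp)

theorem exists_surjective_surfaceGroup_freeGroup_two {g : ℕ} (hg : 2 ≤ g) :
    ∃ φ : SurfaceGroup g →* FreeGroup (Fin 2), Surjective φ := by
  let X : FreeGroup (Fin 2) := .of 0
  let Y : FreeGroup (Fin 2) := .of 1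
  have hg0 : g ≠ 0 := by omega
  -- The generators with indices `0, 1, g, g + 1` are `a₁, a₂, b₁, b₂`.
  let e : Fin (2 * g) → FreeGroup (Fin 2) := fun v =>
    if v.val = 0 ∨ v.val = g + 1 then X else if v.val = 1 ∨ v.val = g then Y else 1
  have hrel : ∀ r ∈ ({surfaceRelator g} : Set _), FreeGroup.lift e r = 1 := by
    rintro _ rfl
    rw [surfaceRelator, map_list_prod, List.map_map, List.prod_map_finRange_eq_of_two_le hg]
    · simpa [e, hg0] using mul_inv_cancel ⁅X, Y⁆
    · intro i hi
      simp only [comp_apply, map_commutatorElement, FreeGroup.lift_apply_of, e]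
      rw [if_neg (by omega), if_neg (by omega), commutatorElement_one_left]
  refine ⟨PresentedGroup.toGroup hrel, MonoidHom.range_eq_top.1 (eq_top_iff.2 ?_)⟩
  rw [← FreeGroup.closure_range_of, Subgroup.closure_le]
  rintro _ ⟨v, rfl⟩
  fin_cases v
  · refine ⟨PresentedGroup.of ⟨0, by omega⟩, ?_⟩
    exact (PresentedGroup.toGroup.of hrel).trans (by simp [e, X])
  · refine ⟨PresentedGroup.of ⟨1, by omega⟩, ?_⟩
    exact (PresentedGroup.toGroup.of hrel).trans (by simp [e, Y, hg0])

theorem MonoidHom.exists_injective_quotient_ker {G H K : Type*} [Group G] [Group H] [Group K]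
    {j : G →* H} (hj : Injective j) {ψ : K →* H} (h : j.range ≤ ψ.range) :
    ∃ f : G →* K ⧸ ψ.ker, Injective f :=
  ⟨(QuotientGroup.quotientKerEquivRange ψ).symm.toMonoidHom.comp
      (j.codRestrict _ fun x => h ⟨x, rfl⟩),
    fun _ _ hab => hj (congrArg Subtype.val
      ((QuotientGroup.quotientKerEquivRange ψ).symm.injective hab))⟩

theorem IsFinitelyPresented.countable {G : Type*} [Group G] (hG : IsFinitelyPresented G) :
    Countable G := by
  obtain ⟨m, R, ⟨e⟩⟩ := hG
  have := (PresentedGroup.mk_surjective (R : Set (FreeGroup (Fin m)))).countable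
  exact e.injective.countable

/-- Every finitely presented group embeds in the deck transformation group of a
regular cover of the closed orientable surface of genus `g ≥ 2`. -/
theorem finitely_presented_embeds_in_deck_group
    (G : Type*) [Group G] (hG : IsFinitelyPresented G) (g : ℕ) (hg : 2 ≤ g) :
    ∃ (N : Subgroup (SurfaceGroup g)) (hN : N.Normal),
      haveI := hN
      ∃ f : G →* SurfaceGroup g ⧸ N, Function.Injective f := by
  have := hG.countable
  obtain ⟨H, _, x, y, j, hj, hjr⟩ := exists_injective_range_le_closure_pair G
  obtain ⟨φ, hφ⟩ := exists_surjective_surfaceGroup_freeGroup_two hg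
  let ψ := (FreeGroup.lift ![x, y]).comp φ
  have hψ : ψ.range = Subgroup.closure {x, y} := by
    rw [MonoidHom.range_comp, MonoidHom.range_eq_top.2 hφ, ← MonoidHom.range_eq_map,
      FreeGroup.range_lift_eq_closure, Matrix.range_cons_cons_empty]
  obtain ⟨f, hf⟩ := MonoidHom.exists_injective_quotient_ker hj (hψ ▸ hjr)
  exact ⟨ψ.ker, inferInstance, f, hf⟩
end

section
/- Let n ≥ 1 and let φ : FreeGroup (Fin n) →* Multiplicative (Fin n → ZMod 2) be the homomorphism sending the i-th free generator xᵢ to the i-th standard basis vector. Then the kernel of φ equals the normal closure in FreeGroup (Fin n) of the set of squares { (∏_{i∈A} xᵢ)² : A a nonempty subset of Fin n }, where the product is taken in increasing order of indices. In particular, the elementary abelian 2-group (ZMod 2)ⁿ is presented on n generators by the relators consisting of the square of one lift of each of its 2ⁿ − 1 nontrivial elements. -/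
/-!
Modulo the squares of the increasing products, the images `gᵢ` of the generators satisfy
`gᵢ² = 1` and `(gᵢ gⱼ)² = 1`, so they are commuting involutions. Commuting elements of
order dividing `2` define a homomorphism out of `(ℤ/2)ⁿ`, through which the quotient map
then factors; hence the kernel of the map to `(ℤ/2)ⁿ` lies in the normal closure. The
converse inclusion holds because `(ℤ/2)ⁿ` has exponent `2`.
-/

/-- The homomorphism from the free group on `n` generators to `(ℤ/2)ⁿ`
(written multiplicatively) sending the `i`-th generator to the `i`-th
standard basis vector. -/
def mod2Abelianization (n : ℕ) :
    FreeGroup (Fin n) →* Multiplicative (Fin n → ZMod 2) :=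
  FreeGroup.lift fun i => Multiplicative.ofAdd (Pi.single i 1)

/-- The product, in increasing order of indices, of the free generators
indexed by a finite set `A`. -/
def incProd {n : ℕ} (A : Finset (Fin n)) : FreeGroup (Fin n) :=
  ((A.sort (· ≤ ·)).map FreeGroup.of).prod

theorem Commute.of_sq_eq_one {M : Type*} [Monoid M] [IsCancelMul M] {a b : M}
    (ha : a ^ 2 = 1) (hb : b ^ 2 = 1) (hab : (a * b) ^ 2 = 1) : Commute a b := by
  rw [commute_iff_eq, ← mul_right_inj a, ← mul_left_inj b]
  calc a * (a * b) * b = a ^ 2 * b ^ 2 := by simp only [pow_two, mul_assoc]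
    _ = (a * b) ^ 2 := by rw [ha, hb, hab, mul_one]
    _ = a * (b * a) * b := by simp only [pow_two, mul_assoc]

section ZModLift

variable {G : Type*} [Monoid G] (m : ℕ) [NeZero m]

def zmodPowHom (g : G) (hg : g ^ m = 1) : Multiplicative (ZMod m) →* G where
  toFun a := g ^ a.toAdd.val
  map_one' := by simp
  map_mul' a b := by simp only [toAdd_mul, ZMod.val_add, ← pow_eq_pow_mod _ hg, pow_add]

theorem zmodPowHom_ofAdd_one (g : G) (hg : g ^ m = 1) :
    zmodPowHom m g hg (Multiplicative.ofAdd 1) = g := by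
  simp only [zmodPowHom, MonoidHom.coe_mk, OneHom.coe_mk, toAdd_ofAdd,
    ZMod.val_one_eq_one_mod, ← pow_eq_pow_mod _ hg, pow_one]

variable {ι : Type*} [Fintype ι]

def piZModLift (g : ι → G) (hg : ∀ i, g i ^ m = 1)
    (hcomm : Pairwise fun i j => Commute (g i) (g j)) : Multiplicative (ι → ZMod m) →* G :=
  (MonoidHom.noncommPiCoprod (fun i => zmodPowHom m (g i) (hg i))
    fun _ _ hij _ _ => (hcomm hij).pow_pow _ _).comp
      (MulEquiv.funMultiplicative ι (ZMod m)).toMonoidHom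

theorem piZModLift_single [DecidableEq ι] (g : ι → G) (hg : ∀ i, g i ^ m = 1)
    (hcomm : Pairwise fun i j => Commute (g i) (g j)) (i : ι) :
    piZModLift m g hg hcomm (Multiplicative.ofAdd (Pi.single i 1)) = g i := by
  have hsingle : MulEquiv.funMultiplicative ι (ZMod m) (Multiplicative.ofAdd (Pi.single i 1)) =
      Pi.mulSingle i (Multiplicative.ofAdd 1) := by
    ext j
    rcases eq_or_ne j i with rfl | hj <;> simp [*]
  rw [piZModLift, MonoidHom.comp_apply, MulEquiv.coe_toMonoidHom, hsingle]
  exact (MonoidHom.noncommPiCoprod_mulSingle _ _ _).trans (zmodPowHom_ofAdd_one m _ _)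

end ZModLift

theorem incProd_singleton {n : ℕ} (i : Fin n) : incProd {i} = FreeGroup.of i := by
  simp [incProd, Finset.sort_singleton]

theorem incProd_pair {n : ℕ} {i j : Fin n} (h : i < j) :
    incProd {i, j} = FreeGroup.of i * FreeGroup.of j := by
  have hsort : ({i, j} : Finset (Fin n)).sort (· ≤ ·) = [i, j] := by
    rw [Finset.sort_insert (· ≤ ·) (by simpa using h.le) (by simpa using h.ne),
      Finset.sort_singleton]
  simp [incProd, hsort]

theorem mod2Abelianization_sq (n : ℕ) (x : FreeGroup (Fin n)) :
    mod2Abelianization n (x ^ 2) = 1 := by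
  apply Multiplicative.toAdd.injective
  rw [map_pow, toAdd_pow, toAdd_one]
  funext i
  exact CharTwo.two_nsmul _

theorem ker_mod2Abelianization_le_ker {n : ℕ} {G : Type*} [Group G]
    (f : FreeGroup (Fin n) →* G) (hsq : ∀ i, f (FreeGroup.of i) ^ 2 = 1)
    (hcomm : Pairwise fun i j => Commute (f (FreeGroup.of i)) (f (FreeGroup.of j))) :
    (mod2Abelianization n).ker ≤ f.ker := by
  have hfactor : (piZModLift 2 _ hsq hcomm).comp (mod2Abelianization n) = f :=
    FreeGroup.ext_hom _ _ fun i => by simp [mod2Abelianization, piZModLift_single]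
  rw [← hfactor, ← MonoidHom.comap_ker]
  exact MonoidHom.ker_le_comap _ _

theorem ker_mod2Abelianization_eq_normalClosure_of_squares_general (n : ℕ) :
    (mod2Abelianization n).ker =
      Subgroup.normalClosure
        {x : FreeGroup (Fin n) |
          ∃ A : Finset (Fin n), A.Nonempty ∧ x = (incProd A) ^ 2} := by
  set N := Subgroup.normalClosure
    {x : FreeGroup (Fin n) | ∃ A : Finset (Fin n), A.Nonempty ∧ x = (incProd A) ^ 2}
  let π := QuotientGroup.mk' N
  have hsq : ∀ A : Finset (Fin n), A.Nonempty → π (incProd A) ^ 2 = 1 := fun A hA => by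
    rw [← map_pow, QuotientGroup.mk'_apply, QuotientGroup.eq_one_iff]
    exact Subgroup.subset_normalClosure ⟨A, hA, rfl⟩
  have hgen : ∀ i, π (FreeGroup.of i) ^ 2 = 1 := fun i => by
    simpa only [incProd_singleton] using hsq {i} (Finset.singleton_nonempty i)
  have hcomm : Pairwise fun i j => Commute (π (FreeGroup.of i)) (π (FreeGroup.of j)) :=
    Pairwise.of_lt fun i j hij => Commute.of_sq_eq_one (hgen i) (hgen j) <| by
      simpa only [incProd_pair hij, map_mul] using hsq {i, j} (Finset.insert_nonempty _ _)
  refine le_antisymm ?_ (Subgroup.normalClosure_le_normal ?_)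
  · simpa only [π, QuotientGroup.ker_mk'] using ker_mod2Abelianization_le_ker π hgen hcomm
  · rintro _ ⟨A, -, rfl⟩
    exact mod2Abelianization_sq n _

/-- The kernel of the map onto the elementary abelian `2`-group `(ℤ/2)ⁿ` is the
normal closure of the squares of one lift of each of the `2ⁿ − 1` nontrivial
elements. -/
theorem ker_mod2Abelianization_eq_normalClosure_of_squares (n : ℕ) (hn : 1 ≤ n) :
    (mod2Abelianization n).ker =
      Subgroup.normalClosure
        {x : FreeGroup (Fin n) |
          ∃ A : Finset (Fin n), A.Nonempty ∧ x = (incProd A) ^ 2} :=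
  ker_mod2Abelianization_eq_normalClosure_of_squares_general n
end

section
/- For every g ≥ 2, the commutator subgroup of the genus-g surface group SurfaceGroup g is a free group. -/
/-!
Write `t = a₁`, `b = b₁` and `w = ∏_{i ≥ 2} ⁅aᵢ, bᵢ⁆`, a word in the remaining generators `S`, so
that the relator is `⁅t, b⁆ * w`. A group `⟨t, b, S | ⁅t, b⁆ * w⟩` is a semidirect product `F ⋊ ℤ`:
`F` is free on `b` and on the conjugates `sₙ = tⁿ s t⁻ⁿ` (`s ∈ S`, `n ∈ ℤ`), and `t` acts by
`sₙ ↦ sₙ₊₁`, `b ↦ w₀⁻¹ b`, where `w₀` is `w` spelled in the letters `s₀`; the relation says exactly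
`t b t⁻¹ = w⁻¹ b`. As `ℤ` is abelian, the commutator subgroup lies in `F`, so it is free by
Nielsen–Schreier.
-/

open FreeGroup SemidirectProduct
open scoped commutatorElement

theorem SemidirectProduct.commutator_le_range_inl {N H : Type*} [Group N] [CommGroup H]
    (φ : H →* MulAut N) : commutator (N ⋊[φ] H) ≤ inl.range := by
  rw [range_inl_eq_ker_rightHom]
  exact Abelianization.commutator_subset_ker _

instance SemidirectProduct.isFreeGroup_commutator {N H : Type*} [Group N] [CommGroup H]
    [IsFreeGroup N] (φ : H →* MulAut N) : IsFreeGroup (commutator (N ⋊[φ] H)) :=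
  .ofMulEquiv <| (Subgroup.equivMapOfInjective _ inl inl_injective).trans <|
    .subgroupCongr (Subgroup.map_comap_eq_self (commutator_le_range_inl φ))

theorem SemidirectProduct.commutatorElement_inr_inl {N H : Type*} [Group N] [Group H]
    {φ : H →* MulAut N} (h : H) (n : N) :
    ⁅(inr h : N ⋊[φ] H), inl n⁆ = (inl (φ h n * n⁻¹) : N ⋊[φ] H) := by
  rw [commutatorElement_def, _root_.map_mul, _root_.map_inv, inl_aut, _root_.map_inv]

theorem MulEquiv.isFreeGroup_commutator {G H : Type*} [Group G] [Group H] (e : G ≃* H)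
    [IsFreeGroup (commutator H)] : IsFreeGroup (commutator G) :=
  have h : (commutator G).map e = commutator H := by
    rw [map_commutator_eq, MonoidHom.range_eq_top.2 e.surjective, commutator_def]
  .ofMulEquiv ((e.subgroupMap _).trans (.subgroupCongr h)).symm

theorem MonoidHom.apply_zpow_apply_of_semiconj {M N : Type*} [Group M] [Group N] (f : M →* N)
    {α : MulAut M} {β : MulAut N} (h : ∀ x, f (α x) = β (f x)) (n : ℤ) (x : M) :
    f ((α ^ n) x) = (β ^ n) (f x) := by
  have h_inv (x : M) : f (α⁻¹ x) = β⁻¹ (f x) := by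
    rw [← MulAut.inv_apply_self (M := N) β (f (α⁻¹ x)), ← h, MulAut.apply_inv_self (M := M)]
  induction n using Int.induction_on generalizing x with
  | zero => rfl
  | succ n ih => rw [zpow_add_one, MulAut.mul_apply, ih, h, ← MulAut.mul_apply, ← zpow_add_one]
  | pred n ih =>
    rw [zpow_sub_one, MulAut.mul_apply, ih, h_inv, ← MulAut.mul_apply, ← zpow_sub_one]

namespace SplitRelator

section Shift

variable {S : Type*} (w : FreeGroup S)

def atLevel (n : ℤ) : FreeGroup S →* FreeGroup (Unit ⊕ S × ℤ) :=
  FreeGroup.map fun s => .inr (s, n)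

def shiftHom : FreeGroup (Unit ⊕ S × ℤ) →* FreeGroup (Unit ⊕ S × ℤ) :=
  lift <| Sum.elim (fun _ => (atLevel 0 w)⁻¹ * of (.inl ())) fun p => of (.inr (p.1, p.2 + 1))

def unshiftHom : FreeGroup (Unit ⊕ S × ℤ) →* FreeGroup (Unit ⊕ S × ℤ) :=
  lift <| Sum.elim (fun _ => atLevel (-1) w * of (.inl ())) fun p => of (.inr (p.1, p.2 - 1))

@[simp]
theorem shiftHom_of_inl : shiftHom w (of (.inl ())) = (atLevel 0 w)⁻¹ * of (.inl ()) := by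
  simp [shiftHom]

@[simp]
theorem shiftHom_of_inr (s : S) (n : ℤ) : shiftHom w (of (.inr (s, n))) = of (.inr (s, n + 1)) := by
  simp [shiftHom]

@[simp]
theorem unshiftHom_of_inl : unshiftHom w (of (.inl ())) = atLevel (-1) w * of (.inl ()) := by
  simp [unshiftHom]

@[simp]
theorem unshiftHom_of_inr (s : S) (n : ℤ) :
    unshiftHom w (of (.inr (s, n))) = of (.inr (s, n - 1)) := by
  simp [unshiftHom]

@[simp]
theorem shiftHom_atLevel (n : ℤ) (x : FreeGroup S) :
    shiftHom w (atLevel n x) = atLevel (n + 1) x := by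
  suffices (shiftHom w).comp (atLevel n) = atLevel (n + 1) from DFunLike.congr_fun this x
  exact FreeGroup.ext_hom _ _ fun _ => by simp [atLevel]

@[simp]
theorem unshiftHom_atLevel (n : ℤ) (x : FreeGroup S) :
    unshiftHom w (atLevel n x) = atLevel (n - 1) x := by
  suffices (unshiftHom w).comp (atLevel n) = atLevel (n - 1) from DFunLike.congr_fun this x
  exact FreeGroup.ext_hom _ _ fun _ => by simp [atLevel]

def shift : MulAut (FreeGroup (Unit ⊕ S × ℤ)) :=
  MonoidHom.toMulEquiv (shiftHom w) (unshiftHom w)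
    (FreeGroup.ext_hom _ _ <| by rintro (⟨⟨⟩⟩ | ⟨s, n⟩) <;> simp)
    (FreeGroup.ext_hom _ _ <| by rintro (⟨⟨⟩⟩ | ⟨s, n⟩) <;> simp)

@[simp]
theorem shift_apply (x : FreeGroup (Unit ⊕ S × ℤ)) : shift w x = shiftHom w x := rfl

@[simp]
theorem shift_inv_apply (x : FreeGroup (Unit ⊕ S × ℤ)) : (shift w)⁻¹ x = unshiftHom w x := rfl

theorem shift_zpow_of_inr (n m : ℤ) (s : S) :
    (shift w ^ n) (of (.inr (s, m))) = of (.inr (s, m + n)) := by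
  induction n using Int.induction_on generalizing m with
  | zero => simp
  | succ n ih => rw [zpow_add_one, MulAut.mul_apply, shift_apply, shiftHom_of_inr, ih, add_assoc,
      add_comm 1]
  | pred n ih => rw [zpow_sub_one, MulAut.mul_apply, shift_inv_apply, unshiftHom_of_inr, ih,
      sub_add_eq_add_sub, add_sub_assoc]

abbrev ShiftProduct := FreeGroup (Unit ⊕ S × ℤ) ⋊[zpowersHom _ (shift w)] Multiplicative ℤ

end Shift

section Presentation

variable {ι : Type*} (t b : ι)

abbrev Other := {i : ι // i ≠ t ∧ i ≠ b}

def relator (w : FreeGroup (Other t b)) : FreeGroup ι :=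
  ⁅of t, of b⁆ * FreeGroup.map Subtype.val w

variable {t b} (w : FreeGroup (Other t b))

theorem of_mul_of_mul_of_inv :
    PresentedGroup.of t * PresentedGroup.of b * (PresentedGroup.of t)⁻¹ =
    (PresentedGroup.mk {relator t b w} (FreeGroup.map Subtype.val w))⁻¹ * PresentedGroup.of b := by
  have hr : PresentedGroup.mk {relator t b w} (⁅of t, of b⁆ * FreeGroup.map Subtype.val w) = 1 :=
    PresentedGroup.one_of_mem rfl
  rw [_root_.map_mul, map_commutatorElement, mul_eq_one_iff_eq_inv, commutatorElement_def,
    mul_inv_eq_iff_eq_mul] at hr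
  exact hr

def kernelHom : FreeGroup (Unit ⊕ Other t b × ℤ) →* PresentedGroup {relator t b w} :=
  lift <| Sum.elim (fun _ => PresentedGroup.of b)
    fun p => MulAut.conj (PresentedGroup.of t ^ p.2) (PresentedGroup.of p.1.1)

@[simp]
theorem kernelHom_of_inl : kernelHom w (of (.inl ())) = PresentedGroup.of b := lift_apply_of

@[simp]
theorem kernelHom_of_inr (s : Other t b) (n : ℤ) :
    kernelHom w (of (.inr (s, n))) = MulAut.conj (PresentedGroup.of t ^ n) (PresentedGroup.of s) :=
  lift_apply_of

theorem kernelHom_atLevel_zero (x : FreeGroup (Other t b)) :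
    kernelHom w (atLevel 0 x) = PresentedGroup.mk _ (FreeGroup.map Subtype.val x) := by
  suffices (kernelHom w).comp (atLevel 0) =
      (PresentedGroup.mk _).comp (FreeGroup.map Subtype.val) from DFunLike.congr_fun this x
  exact FreeGroup.ext_hom _ _ fun _ => by
    simp only [MonoidHom.comp_apply, atLevel, map.of, kernelHom_of_inr, zpow_zero, _root_.map_one,
      MulAut.one_apply]
    rfl

theorem kernelHom_shift (x : FreeGroup (Unit ⊕ Other t b × ℤ)) :
    kernelHom w (shift w x) = MulAut.conj (PresentedGroup.of t) (kernelHom w x) := by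
  suffices (kernelHom w).comp (shiftHom w) =
      (MulAut.conj (PresentedGroup.of t)).toMonoidHom.comp (kernelHom w) from
    DFunLike.congr_fun this x
  refine FreeGroup.ext_hom _ _ ?_
  rintro (⟨⟨⟩⟩ | ⟨s, n⟩)
  · simp [kernelHom_atLevel_zero, of_mul_of_mul_of_inv]
  · simp only [MonoidHom.comp_apply, shiftHom_of_inr, kernelHom_of_inr, add_comm n 1, zpow_one_add,
      _root_.map_mul, MulAut.mul_apply, MulEquiv.coe_toMonoidHom]

def ofShiftProduct : ShiftProduct w →* PresentedGroup {relator t b w} :=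
  SemidirectProduct.lift (kernelHom w) (zpowersHom _ (PresentedGroup.of t)) fun n =>
    MonoidHom.ext fun x => by
      simp only [MonoidHom.comp_apply, MulEquiv.coe_toMonoidHom, zpowersHom_apply, map_zpow]
      exact (kernelHom w).apply_zpow_apply_of_semiconj (kernelHom_shift w) _ x

@[simp]
theorem ofShiftProduct_inl (x : FreeGroup (Unit ⊕ Other t b × ℤ)) :
    ofShiftProduct w (inl x) = kernelHom w x :=
  lift_inl ..

@[simp]
theorem ofShiftProduct_inr (n : Multiplicative ℤ) :
    ofShiftProduct w (inr n) = PresentedGroup.of t ^ n.toAdd :=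
  lift_inr ..

variable [DecidableEq ι]

def genImage (i : ι) : ShiftProduct w :=
  if hit : i = t then inr (.ofAdd 1)
  else if hib : i = b then inl (of (.inl ()))
  else inl (of (.inr (⟨i, hit, hib⟩, 0)))

theorem genImage_left : genImage w t = inr (.ofAdd 1) := dif_pos rfl

theorem genImage_right (h : t ≠ b) : genImage w b = inl (of (.inl ())) := by
  simp [genImage, h.symm]

theorem genImage_other (s : Other t b) : genImage w s = inl (of (.inr (s, 0))) := by
  simp [genImage, s.2.1, s.2.2]

theorem lift_genImage_relator (h : t ≠ b) : lift (genImage w) (relator t b w) = 1 := by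
  have hw : (lift (genImage w)).comp (FreeGroup.map Subtype.val) = inl.comp (atLevel 0) :=
    FreeGroup.ext_hom _ _ fun s => by simp [genImage_other, atLevel]
  rw [relator, _root_.map_mul, map_commutatorElement, lift_apply_of, lift_apply_of, genImage_left,
    genImage_right w h, commutatorElement_inr_inl, ← MonoidHom.comp_apply, hw]
  simp

def toShiftProduct (h : t ≠ b) : PresentedGroup {relator t b w} →* ShiftProduct w :=
  PresentedGroup.toGroup fun _ hr => hr ▸ lift_genImage_relator w h

@[simp]
theorem toShiftProduct_of (h : t ≠ b) (i : ι) :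
    toShiftProduct w h (PresentedGroup.of i) = genImage w i :=
  PresentedGroup.toGroup.of _

theorem ofShiftProduct_comp_toShiftProduct (h : t ≠ b) :
    (ofShiftProduct w).comp (toShiftProduct w h) = MonoidHom.id _ := by
  refine PresentedGroup.ext fun i => ?_
  by_cases hit : i = t
  · subst hit
    simp [genImage_left]
  by_cases hib : i = b
  · subst hib
    simp [genImage_right w h]
  · simp [genImage_other w ⟨i, hit, hib⟩]

theorem toShiftProduct_comp_ofShiftProduct (h : t ≠ b) :
    (toShiftProduct w h).comp (ofShiftProduct w) = MonoidHom.id _ := by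
  refine SemidirectProduct.hom_ext (FreeGroup.ext_hom _ _ ?_) (MonoidHom.ext_mint ?_)
  · rintro (⟨⟨⟩⟩ | ⟨s, n⟩)
    · simp [genImage_right w h]
    · simp only [MonoidHom.comp_apply, MonoidHom.id_apply, ofShiftProduct_inl, kernelHom_of_inr,
        MulAut.conj_apply]
      rw [_root_.map_mul, _root_.map_mul, _root_.map_inv, _root_.map_zpow, toShiftProduct_of,
        toShiftProduct_of, genImage_left, genImage_other, ← _root_.map_zpow inr,
        ← _root_.map_inv inr, ← inl_aut]
      simp [shift_zpow_of_inr]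
  · simp [genImage_left]

def equivShiftProduct (h : t ≠ b) : PresentedGroup {relator t b w} ≃* ShiftProduct w :=
  MonoidHom.toMulEquiv _ _ (ofShiftProduct_comp_toShiftProduct w h)
    (toShiftProduct_comp_ofShiftProduct w h)

end Presentation

theorem isFreeGroup_commutator {ι : Type*} {t b : ι} (h : t ≠ b) (w : FreeGroup (Other t b)) :
    IsFreeGroup (commutator (PresentedGroup {relator t b w})) := by
  classical
  exact (equivShiftProduct w h).isFreeGroup_commutator

end SplitRelator

abbrev SurfaceOther (k : ℕ) :=
  SplitRelator.Other (⟨0, by omega⟩ : Fin (2 * (k + 1))) ⟨k + 1, by omega⟩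

def surfaceTail (k : ℕ) : FreeGroup (SurfaceOther k) :=
  ((List.finRange k).map fun i =>
    ⁅of (⟨⟨i.1 + 1, by omega⟩, by simp [Fin.ext_iff], by simp [Fin.ext_iff]; omega⟩ : SurfaceOther k),
     of (⟨⟨k + 1 + (i.1 + 1), by omega⟩, by simp [Fin.ext_iff], by simp [Fin.ext_iff]⟩ :
       SurfaceOther k)⁆).prod

theorem surfaceRelator_succ (k : ℕ) :
    surfaceRelator (k + 1) = SplitRelator.relator _ _ (surfaceTail k) := by
  rw [surfaceRelator, List.finRange_succ, List.map_cons, List.prod_cons, SplitRelator.relator,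
    surfaceTail, map_list_prod, List.map_map, List.map_map]
  congr 1

/-- The commutator subgroup of the genus-`g` surface group is a free group. -/
theorem commutator_subgroup_of_surface_group_is_free (g : ℕ) (hg : 2 ≤ g) :
    IsFreeGroup (commutator (SurfaceGroup g)) := by
  obtain ⟨k, rfl⟩ : ∃ k, g = k + 1 := ⟨g - 1, by omega⟩
  have h := SplitRelator.isFreeGroup_commutator (by simp [Fin.ext_iff]) (surfaceTail k)
  rw [← surfaceRelator_succ] at h
  exact h
end

section
/- Let F = FreeGroup Bool be the free group on two generators a = FreeGroup.of false and b = FreeGroup.of true. The homomorphism FreeGroup ℕ →* F sending the i-th free generator to b⁻ⁱ · a · bⁱ is injective; that is, the conjugates { b⁻ⁱ a bⁱ : i ∈ ℕ } freely generate a free subgroup of F. -/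
/-- The homomorphism `FreeGroup ℕ →* FreeGroup Bool` sending the `i`-th free
generator to `b⁻ⁱ · a · bⁱ`, where `a = FreeGroup.of false` and
`b = FreeGroup.of true`. -/
def conjugatesHom : FreeGroup ℕ →* FreeGroup Bool :=
  FreeGroup.lift fun i =>
    (FreeGroup.of true ^ i)⁻¹ * FreeGroup.of false * FreeGroup.of true ^ i

open SemidirectProduct in
/-- shift action of ℤ on FreeGroup ℤ -/
def shiftHom : Multiplicative ℤ →* MulAut (FreeGroup ℤ) where
  toFun n := (FreeGroup.freeGroupCongr (Equiv.addRight n.toAdd))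
  map_one' := by ext x; simp
  map_mul' m n := by
    ext x
    simp only [MulAut.mul_def, MulEquiv.trans_apply, FreeGroup.freeGroupCongr_apply]
    rw [FreeGroup.map.comp]
    have : (⇑(Equiv.addRight (Multiplicative.toAdd m)) ∘ ⇑(Equiv.addRight (Multiplicative.toAdd n)))
        = ⇑(Equiv.addRight (Multiplicative.toAdd (m * n))) := by
      funext z
      simp [add_comm, add_assoc, add_left_comm]
    rw [this]

abbrev G := SemidirectProduct (FreeGroup ℤ) (Multiplicative ℤ) shiftHom

def psi : FreeGroup Bool →* G :=
  FreeGroup.lift fun x =>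
    if x then SemidirectProduct.inr (Multiplicative.ofAdd 1)
    else SemidirectProduct.inl (FreeGroup.of 0)

/-- The conjugates `b⁻ⁱ a bⁱ`, `i ∈ ℕ`, freely generate a free subgroup of the
free group on two generators. -/
theorem conjugatesHom_injective : Function.Injective conjugatesHom := by
  have ha : psi (FreeGroup.of false) = SemidirectProduct.inl (FreeGroup.of 0) := by
    simp [psi]
  have hb : psi (FreeGroup.of true) = SemidirectProduct.inr (Multiplicative.ofAdd 1) := by
    simp [psi]
  have key : ∀ i : ℕ, psi (conjugatesHom (FreeGroup.of i)) =
      SemidirectProduct.inl (FreeGroup.of (-(i : ℤ))) := by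
    intro i
    rw [conjugatesHom, FreeGroup.lift_apply_of, map_mul, map_mul, map_inv, map_pow, ha, hb,
      ← map_pow, ← map_inv, ← SemidirectProduct.inl_aut_inv]
    congr 1
    rw [← map_inv]
    simp [shiftHom, ← ofAdd_nsmul]
  have comp : (psi.comp conjugatesHom) =
      SemidirectProduct.inl.comp (FreeGroup.map (fun i : ℕ => (-(i : ℤ)))) := by
    refine FreeGroup.ext_hom _ _ fun i => ?_
    simp only [MonoidHom.comp_apply, key i, FreeGroup.map.of]
  have hmap : Function.Injective (FreeGroup.map (fun i : ℕ => (-(i : ℤ)))) := by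
    have hli : Function.LeftInverse (FreeGroup.map (fun z : ℤ => (-z).toNat))
        (FreeGroup.map (fun i : ℕ => (-(i : ℤ)))) := by
      intro x
      rw [FreeGroup.map.comp]
      simp [Function.comp_def, FreeGroup.map.id']
    exact hli.injective
  have hinj := (SemidirectProduct.inl_injective (φ := shiftHom)).comp hmap
  intro x y h
  have h2 : (psi.comp conjugatesHom) x = (psi.comp conjugatesHom) y := by
    simp [MonoidHom.comp_apply, h]
  rw [comp] at h2
  exact hinj h2
end

section
/- Let F = FreeGroup Bool be the free group on two generators x = FreeGroup.of false and y = FreeGroup.of true. The homomorphism F →* F determined by x ↦ ⁅x,⁅x,y⁆⁆ and y ↦ ⁅y,⁅x,y⁆⁆ is injective; that is, the elements ⁅x,⁅x,y⁆⁆ and ⁅y,⁅x,y⁆⁆ freely generate a free subgroup of rank 2 (which is contained in [F,[F,F]]). -/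
open scoped commutatorElement

/-- The endomorphism of `FreeGroup Bool` (free on `x = FreeGroup.of false` and
`y = FreeGroup.of true`) determined by `x ↦ ⁅x,⁅x,y⁆⁆` and `y ↦ ⁅y,⁅x,y⁆⁆`. -/
def doubleCommutatorHom : FreeGroup Bool →* FreeGroup Bool :=
  FreeGroup.lift fun t =>
    if t then ⁅FreeGroup.of true, ⁅FreeGroup.of false, FreeGroup.of true⁆⁆
    else ⁅FreeGroup.of false, ⁅FreeGroup.of false, FreeGroup.of true⁆⁆

/-!
Ping-pong on reduced words. Write each generator's reduced word as `P ++ M ++ Q⁻¹`. Multiplying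
a reduced word `w` on the left by it cancels less than `M ++ Q⁻¹` unless `w` begins with `Q`,
so the product begins with `P`; likewise the inverse `Q ++ M⁻¹ ++ P⁻¹` sends every word not
beginning with `P` to one beginning with `Q`. If all the `P`'s and `Q`'s are pairwise
incomparable for the prefix order, the sets of words with these prefixes form a ping-pong
table.
-/

namespace FreeGroup

universe u

variable {α : Type u} [DecidableEq α]

theorem IsReduced.prefix_reduce_append {P S L : List (α × Bool)} (hPS : IsReduced (P ++ S))
    (hL : IsReduced L) (hSL : ¬ invRev S <+: L) : P <+: reduce (P ++ S ++ L) := by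
  induction S using List.reverseRecOn generalizing L with
  | nil => exact absurd (List.nil_prefix (l := L)) (by simp [invRev] at hSL)
  | append_singleton S s ih =>
    rcases L with _ | ⟨l, L⟩
    · rw [List.append_nil, hPS.reduce_eq]
      exact List.prefix_append _ _
    by_cases hl : l = (s.1, !s.2)
    · subst hl
      have hstep : reduce (P ++ (S ++ [s]) ++ (s.1, !s.2) :: L) = reduce (P ++ S ++ L) :=
        reduce.Step.eq (by simpa using Red.Step.not (L₁ := P ++ S) (L₂ := L))
      rw [hstep]
      refine ih (hPS.infix ⟨[], [s], by simp⟩) hL.tail ?_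
      rintro ⟨T, hT⟩
      exact hSL ⟨T, by simp [invRev, ← hT]⟩
    · have hsl : s.1 = l.1 → s.2 = l.2 := fun hs ↦ by
        by_contra hne
        exact hl (Prod.ext hs.symm (Bool.eq_not.2 (Ne.symm hne)))
      have hred : IsReduced (P ++ S ++ s :: l :: L) :=
        List.isChain_append_cons_cons.2 ⟨by rw [List.append_assoc]; exact hPS, hsl, hL⟩
      rw [show P ++ (S ++ [s]) ++ l :: L = P ++ S ++ s :: l :: L by simp, hred.reduce_eq,
        List.append_assoc]
      exact List.prefix_append _ _

theorem prefix_toWord_mul {g h : FreeGroup α} {P M Q : List (α × Bool)}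
    (hg : g.toWord = P ++ M ++ invRev Q) (hh : ¬ Q <+: h.toWord) : P <+: (g * h).toWord := by
  rw [List.append_assoc] at hg
  rw [toWord_mul, hg]
  refine IsReduced.prefix_reduce_append (hg ▸ isReduced_toWord) isReduced_toWord ?_
  rw [invRev_append, invRev_invRev]
  exact fun hQ ↦ hh ((List.prefix_append _ _).trans hQ)

theorem prefix_toWord_inv_mul {g h : FreeGroup α} {P M Q : List (α × Bool)}
    (hg : g.toWord = P ++ M ++ invRev Q) (hh : ¬ P <+: h.toWord) : Q <+: (g⁻¹ * h).toWord :=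
  prefix_toWord_mul (M := invRev M)
    (by rw [toWord_inv, hg, invRev_append, invRev_append, invRev_invRev, List.append_assoc]) hh

theorem disjoint_setOf_prefix_toWord {P Q : List (α × Bool)} (hPQ : ¬ P <+: Q)
    (hQP : ¬ Q <+: P) : Disjoint {w : FreeGroup α | P <+: w.toWord} {w | Q <+: w.toWord} :=
  Set.disjoint_left.2 fun _ hP hQ ↦ (List.prefix_or_prefix_of_prefix hP hQ).elim hPQ hQP

theorem injective_lift_of_toWord_eq {ι : Type u} [Nontrivial ι] (a : ι → FreeGroup α)
    (P M Q : ι → List (α × Bool)) (ha : ∀ i, (a i).toWord = P i ++ M i ++ invRev (Q i))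
    (hPQ : Pairwise fun i j ↦ ¬ Sum.elim P Q i <+: Sum.elim P Q j) :
    Function.Injective (lift a) := by
  have hdisj {i j} (hij : i ≠ j) : Disjoint {w : FreeGroup α | Sum.elim P Q i <+: w.toWord}
      {w | Sum.elim P Q j <+: w.toWord} :=
    disjoint_setOf_prefix_toWord (hPQ hij) (hPQ hij.symm)
  refine injective_lift_of_ping_pong a (fun i ↦ {w : FreeGroup α | P i <+: w.toWord})
    (fun i ↦ {w : FreeGroup α | Q i <+: w.toWord}) (fun i ↦ ⟨a i, ?_⟩)
    (fun i j hij ↦ hdisj (Sum.inl_injective.ne hij))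
    (fun i j hij ↦ hdisj (Sum.inr_injective.ne hij))
    (fun i j ↦ hdisj Sum.inl_ne_inr) ?_ ?_
  · show P i <+: (a i).toWord
    rw [ha, List.append_assoc]
    exact List.prefix_append _ _
  · rintro i _ ⟨w, hw, rfl⟩
    exact prefix_toWord_mul (ha i) hw
  · rintro i _ ⟨w, hw, rfl⟩
    exact prefix_toWord_inv_mul (ha i) hw

end FreeGroup

/-- The elements `⁅x,⁅x,y⁆⁆` and `⁅y,⁅x,y⁆⁆` freely generate a free subgroup of
rank 2 of the free group on `x, y`. -/
theorem doubleCommutatorHom_injective : Function.Injective doubleCommutatorHom :=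
  -- `(false, true)`, `(false, false)`, `(true, true)`, `(true, false)` are `x, x⁻¹, y, y⁻¹`:
  -- `⁅x,⁅x,y⁆⁆ = (x x)(y x⁻¹ y⁻¹ x⁻¹)(x y x⁻¹ y⁻¹)⁻¹` and `⁅y,⁅x,y⁆⁆ = (y)(x y x⁻¹)(x y x⁻¹ y)⁻¹`.
  FreeGroup.injective_lift_of_toWord_eq _
    (fun t ↦ if t then [(true, true)] else [(false, true), (false, true)])
    (fun t ↦ if t then [(false, true), (true, true), (false, false)]
      else [(true, true), (false, false), (true, false), (false, false)])
    (fun t ↦ if t then [(false, true), (true, true), (false, false), (true, true)]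
      else [(false, true), (true, true), (false, false), (true, false)])
    (by decide) (by unfold Pairwise; decide)
end

section
/- Every countable group G embeds into a group generated by two elements: there exist a group T, elements t₁, t₂ of T with Subgroup.closure {t₁, t₂} = ⊤, and an injective group homomorphism from G into T. -/
/-!
B. H. Neumann's permutation construction. For `f : ℤ → Perm β` let `L f` act on the fibre of
`ℤ × β` over level `m` by `f m`, and let `τ` shift the level by one, so that conjugating `L f`
by a power of `τ` translates `f`. On `ℤ × G`, if `a g` multiplies by `g` on the negative levels,
then `⁅τ, a g⁆` multiplies by `g` on level `0` only.

Given generators `e n` of `G`, let `σ = L s` on `ℤ × ℤ × G`, where `s 0 = τ`,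
`s (2n+1) = a (e n)` and `s` is trivial elsewhere. Translating `s` by `2n+1` moves level `2n+1`
onto level `0`; all other nontrivial levels of `s` are odd and positive and so are moved onto
even levels, where `s` is trivial. Hence `⁅σ, τ^-(2n+1) σ τ^(2n+1)⁆` is `⁅τ, a (e n)⁆` placed
at level `0`, the image of `e n` under an embedding of `G`, and `⟨σ, τ⟩` contains a copy of `G`.
-/

open Equiv Function
open scoped commutatorElement

universe u

namespace Equiv.Perm

variable {ι β : Type*}

variable (ι β) in
def prodCongrRightHom : (ι → Perm β) →* Perm (ι × β) where
  toFun := prodCongrRight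
  map_one' := rfl
  map_mul' _ _ := rfl

@[simp] lemma prodCongrRightHom_apply (f : ι → Perm β) (i : ι) (y : β) :
    prodCongrRightHom ι β f (i, y) = (i, f i y) := rfl

lemma prodCongrRightHom_injective : Injective (prodCongrRightHom ι β) := by
  intro f g h
  ext i y
  simpa using congr($h (i, y))

section Shift

variable {A : Type*} [AddGroup A]

def shiftFst (a : A) : Perm (A × β) := (Equiv.addRight a).prodCongr (Equiv.refl β)

@[simp] lemma shiftFst_apply (a m : A) (y : β) : shiftFst a (m, y) = (m + a, y) := rfl

lemma shiftFst_zpow (a : A) (n : ℤ) : (shiftFst a : Perm (A × β)) ^ n = shiftFst (n • a) := by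
  have : (shiftFst a : Perm (A × β)) ^ n =
      ((Equiv.addRight a) ^ n).prodCongr (Equiv.refl β) := by
    induction n using Int.induction_on with
    | zero => rfl
    | succ n ih => rw [zpow_add_one, ih, zpow_add_one]; rfl
    | pred n ih => rw [zpow_sub_one, ih, zpow_sub_one]; rfl
  rw [this, Equiv.zsmul_addRight]; rfl

lemma shiftFst_inv (a : A) : (shiftFst a : Perm (A × β))⁻¹ = shiftFst (-a) := by
  simpa using shiftFst_zpow (β := β) a (-1)

lemma shiftFst_conj_prodCongrRightHom (a : A) (f : A → Perm β) :
    shiftFst a * prodCongrRightHom A β f * (shiftFst a)⁻¹ =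
      prodCongrRightHom A β (fun m => f (m - a)) := by
  ext ⟨m, y⟩ <;> simp [shiftFst_inv, mul_apply, sub_eq_add_neg]

end Shift

end Equiv.Perm

lemma Pi.commutatorElement_eq_mulSingle {ι : Type*} [DecidableEq ι] {H : ι → Type*}
    [∀ i, Group (H i)] (f g : ∀ i, H i) (i : ι) (h : ∀ j ≠ i, f j = 1 ∨ g j = 1) :
    ⁅f, g⁆ = Pi.mulSingle i ⁅f i, g i⁆ := by
  ext j
  rcases eq_or_ne j i with rfl | hj
  · simp [commutatorElement_def]
  · rcases h j hj with h | h <;> simp [commutatorElement_def, h, hj]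

namespace HigmanNeumannNeumann

open Equiv.Perm

variable {β P : Type*} [Group P]

variable (β) in
def atZero : Perm β →* Perm (ℤ × β) :=
  (prodCongrRightHom ℤ β).comp (MonoidHom.mulSingle (fun _ => Perm β) 0)

lemma atZero_injective : Injective (atZero β) :=
  prodCongrRightHom_injective.comp (Pi.mulSingle_injective (M := fun _ : ℤ => Perm β) 0)

def onNegatives (p : Perm β) : Perm (ℤ × β) :=
  prodCongrRightHom ℤ β (fun m => if m < 0 then p else 1)

lemma commutatorElement_shiftFst_onNegatives (p : Perm β) :
    ⁅(shiftFst (1 : ℤ) : Perm (ℤ × β)), onNegatives p⁆ = atZero β p := by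
  rw [onNegatives, commutatorElement_def, shiftFst_conj_prodCongrRightHom, ← map_inv,
    ← map_mul, atZero, MonoidHom.comp_apply]
  congr 1
  ext1 m
  rcases lt_trichotomy m 0 with hm | rfl | hm
  · simp [hm, hm.ne, show ¬ 1 ≤ m by omega]
  · simp
  · simp [hm.ne', hm.not_gt, show ¬ m < 1 by omega]

def interleave (t : P) (b : ℕ → P) (m : ℤ) : P :=
  if m = 0 then t else if 0 < m ∧ m % 2 = 1 then b (m / 2).toNat else 1

lemma interleave_zero (t : P) (b : ℕ → P) : interleave t b 0 = t := rfl

lemma interleave_two_mul_add_one (t : P) (b : ℕ → P) (n : ℕ) :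
    interleave t b (2 * n + 1) = b n := by
  rw [interleave, if_neg (by omega), if_pos (by omega)]
  congr
  omega

lemma interleave_eq_one (t : P) (b : ℕ → P) {m : ℤ} (h₀ : m ≠ 0)
    (h : ¬(0 < m ∧ m % 2 = 1)) :
    interleave t b m = 1 := by
  rw [interleave, if_neg h₀, if_neg h]

lemma commutatorElement_interleave (t : P) (b : ℕ → P) (n : ℕ) :
    ⁅interleave t b, fun m => interleave t b (m + (2 * n + 1))⁆ =
      Pi.mulSingle 0 ⁅t, b n⁆ := by
  rw [Pi.commutatorElement_eq_mulSingle _ _ 0, zero_add, interleave_zero,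
    interleave_two_mul_add_one]
  intro m hm
  by_cases hodd : 0 < m ∧ m % 2 = 1
  · exact Or.inr (interleave_eq_one t b (by omega) (by omega))
  · exact Or.inl (interleave_eq_one t b hm hodd)

lemma atZero_commutatorElement_eq (t : Perm β) (b : ℕ → Perm β) (n : ℕ) :
    atZero β ⁅t, b n⁆ = ⁅prodCongrRightHom ℤ β (interleave t b),
      shiftFst (-(2 * n + 1 : ℤ)) * prodCongrRightHom ℤ β (interleave t b) *
        (shiftFst (-(2 * n + 1 : ℤ)))⁻¹⁆ := by
  rw [shiftFst_conj_prodCongrRightHom, ← map_commutatorElement]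
  simp only [sub_neg_eq_add]
  rw [commutatorElement_interleave]
  rfl

lemma atZero_commutatorElement_mem_closure (t : Perm β) (b : ℕ → Perm β) (n : ℕ) :
    atZero β ⁅t, b n⁆ ∈ Subgroup.closure
      {prodCongrRightHom ℤ β (interleave t b), shiftFst (1 : ℤ)} := by
  have hσ : prodCongrRightHom ℤ β (interleave t b) ∈
      Subgroup.closure {prodCongrRightHom ℤ β (interleave t b), shiftFst (1 : ℤ)} :=
    Subgroup.subset_closure (by simp)
  have hshift (k : ℤ) : shiftFst k ∈
      Subgroup.closure {prodCongrRightHom ℤ β (interleave t b), shiftFst (1 : ℤ)} := by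
    simpa [shiftFst_zpow] using
      zpow_mem (Subgroup.subset_closure (by simp) : shiftFst (1 : ℤ) ∈ _) k
  rw [atZero_commutatorElement_eq, commutatorElement_def]
  have hconj :=
    mul_mem (mul_mem (hshift (-(2 * n + 1 : ℤ))) hσ) (inv_mem (hshift (-(2 * n + 1 : ℤ))))
  exact mul_mem (mul_mem (mul_mem hσ hconj) (inv_mem hσ)) (inv_mem hconj)

def embedding (G : Type*) [Group G] : G →* Perm (ℤ × ℤ × G) :=
  (atZero (ℤ × G)).comp ((atZero G).comp (MulAction.toPermHom G G))

lemma embedding_injective (G : Type*) [Group G] : Injective (embedding G) :=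
  atZero_injective.comp (atZero_injective.comp MulAction.toPerm_injective)

def generator {G : Type*} [Group G] (e : ℕ → G) : Perm (ℤ × ℤ × G) :=
  prodCongrRightHom ℤ (ℤ × G)
    (interleave (shiftFst 1) (fun n => onNegatives (MulAction.toPerm (e n))))

lemma embedding_mem_closure {G : Type*} [Group G] (e : ℕ → G) (n : ℕ) :
    embedding G (e n) ∈ Subgroup.closure {generator e, shiftFst (1 : ℤ)} := by
  have := atZero_commutatorElement_mem_closure (shiftFst (1 : ℤ) : Perm (ℤ × G))
    (fun n => onNegatives (MulAction.toPerm (e n))) n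
  rwa [commutatorElement_shiftFst_onNegatives] at this

end HigmanNeumannNeumann

lemma Subgroup.closure_pair_mk_eq_top {M : Type*} [Group M] (a b : M) :
    Subgroup.closure {(⟨a, subset_closure (by simp)⟩ : closure ({a, b} : Set M)),
      ⟨b, subset_closure (by simp)⟩} = ⊤ := by
  convert closure_closure_coe_preimage (k := ({a, b} : Set M))
  ext ⟨x, hx⟩
  simp [Subtype.ext_iff]

lemma exists_two_generated_of_range_le_closure {G M : Type u} [Group G] [Group M] (f : G →* M)
    (hf : Injective f) (a b : M) (hle : f.range ≤ Subgroup.closure {a, b}) :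
    ∃ (T : Type u) (_ : Group T) (t₁ t₂ : T),
      Subgroup.closure {t₁, t₂} = ⊤ ∧ ∃ g : G →* T, Injective g :=
  ⟨Subgroup.closure {a, b}, inferInstance, _, _, Subgroup.closure_pair_mk_eq_top a b,
    f.codRestrict _ (fun x => hle ⟨x, rfl⟩), fun _ _ h => hf congr(Subtype.val $h)⟩

open HigmanNeumannNeumann Equiv.Perm in
theorem exists_two_generated_of_closure_range_eq_top {G : Type u} [Group G] (e : ℕ → G)
    (he : Subgroup.closure (Set.range e) = ⊤) :
    ∃ (T : Type u) (_ : Group T) (t₁ t₂ : T),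
      Subgroup.closure {t₁, t₂} = ⊤ ∧ ∃ f : G →* T, Injective f := by
  refine exists_two_generated_of_range_le_closure (embedding G) (embedding_injective G)
    (generator e) (shiftFst 1) ?_
  rw [MonoidHom.range_eq_map, ← he, MonoidHom.map_closure, Subgroup.closure_le]
  rintro _ ⟨_, ⟨n, rfl⟩, rfl⟩
  exact embedding_mem_closure e n

/-- Higman–Neumann–Neumann: every countable group embeds into a group
generated by two elements. -/
theorem countable_group_embeds_in_two_generator_group
    (G : Type*) [Group G] [Countable G] :
    ∃ (T : Type) (_ : Group T) (t₁ t₂ : T),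
      Subgroup.closure {t₁, t₂} = ⊤ ∧
      ∃ f : G →* T, Function.Injective f := by
  obtain ⟨e, he⟩ := exists_surjective_nat G
  have he' : (equivShrink.{0} G ∘ e).Surjective := (equivShrink.{0} G).surjective.comp he
  obtain ⟨T, _, t₁, t₂, hgen, f, hf⟩ := exists_two_generated_of_closure_range_eq_top
    (equivShrink.{0} G ∘ e) (by rw [he'.range_eq, Subgroup.closure_univ])
  let φ : G ≃* Shrink.{0} G := Shrink.mulEquiv.symm
  exact ⟨T, _, t₁, t₂, hgen, f.comp φ.toMonoidHom, hf.comp φ.injective⟩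
end
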